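/- Let H = conv{(cos(kπ/3), sin(kπ/3)) : k = 0,…,5} and H' = H + (0,√3) be two adjacent unit hexagons, decomposed into unit rhombuses as H = P₁ ∪ P₂ ∪ P₃ with P₁ = conv{(0,0), (1,0), (1/2,√3/2), (−1/2,√3/2)}, P₂ = conv{(0,0), (−1/2,√3/2), (−1,0), (−1/2,−√3/2)}, P₃ = conv{(0,0), (−1/2,−√3/2), (1/2,−√3/2), (1,0)}, and H' = Q_a ∪ Q_b ∪ Q_c with Q_a = conv{(0,√3), (1,√3), (1/2,3√3/2), (−1/2,3√3/2)}, Q_b = conv{(0,√3), (−1/2,3√3/2), (−1,√3), (−1/2,√3/2)}, Q_c = conv{(0,√3), (−1/2,√3/2), (1/2,√3/2), (1,√3)}. For compact sets K, K' let G_{K,K'}(d) denote the probability that ‖X − Y‖ ≤ d when X is uniform in K, Y is uniform in K', and X, Y are independent. Then for every d ∈ ℝ: G_{H,H'}(d) = (1/9)·[G_{P₁,Q_c}(d) + G_{P₂,Q_b}(d) + G_{P₃,Q_a}(d)] + (2/9)·[G_{P₁,Q_a}(d) + G_{P₁,Q_b}(d) + G_{P₂,Q_a}(d)]. -/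

import Mathlib

open MeasureTheory Real Set

noncomputable section

abbrev E2 := EuclideanSpace ℝ (Fin 2)

def pt (a b : ℝ) : E2 := WithLp.toLp 2 ![a, b]

/-- The uniform probability measure on a set `K ⊆ ℝ²`: normalized restricted Lebesgue measure. -/
def unif (K : Set E2) : Measure E2 := (volume K)⁻¹ • volume.restrict K

/-- The unit hexagon: convex hull of the six points (cos(kπ/3), sin(kπ/3)). -/
def hexa : Set E2 :=
  convexHull ℝ (Set.range fun k : Fin 6 => pt (Real.cos (k * π / 3)) (Real.sin (k * π / 3)))

/-- The adjacent unit hexagon H' = H + (0,√3). -/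
def hexa' : Set E2 := (fun p => p + pt 0 (Real.sqrt 3)) '' hexa

/-- P₁ = conv{(0,0), (1,0), (1/2,√3/2), (−1/2,√3/2)}. -/
def P1 : Set E2 :=
  convexHull ℝ {pt 0 0, pt 1 0, pt (1/2) (Real.sqrt 3 / 2), pt (-(1/2)) (Real.sqrt 3 / 2)}

/-- P₂ = conv{(0,0), (−1/2,√3/2), (−1,0), (−1/2,−√3/2)}. -/
def P2 : Set E2 :=
  convexHull ℝ {pt 0 0, pt (-(1/2)) (Real.sqrt 3 / 2), pt (-1) 0,
    pt (-(1/2)) (-(Real.sqrt 3 / 2))}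

/-- P₃ = conv{(0,0), (−1/2,−√3/2), (1/2,−√3/2), (1,0)}. -/
def P3 : Set E2 :=
  convexHull ℝ {pt 0 0, pt (-(1/2)) (-(Real.sqrt 3 / 2)), pt (1/2) (-(Real.sqrt 3 / 2)),
    pt 1 0}

/-- Q_a = conv{(0,√3), (1,√3), (1/2,3√3/2), (−1/2,3√3/2)}. -/
def Qa : Set E2 :=
  convexHull ℝ {pt 0 (Real.sqrt 3), pt 1 (Real.sqrt 3), pt (1/2) (3*Real.sqrt 3/2),
    pt (-(1/2)) (3*Real.sqrt 3/2)}

/-- Q_b = conv{(0,√3), (−1/2,3√3/2), (−1,√3), (−1/2,√3/2)}. -/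
def Qb : Set E2 :=
  convexHull ℝ {pt 0 (Real.sqrt 3), pt (-(1/2)) (3*Real.sqrt 3/2), pt (-1) (Real.sqrt 3),
    pt (-(1/2)) (Real.sqrt 3/2)}

/-- Q_c = conv{(0,√3), (−1/2,√3/2), (1/2,√3/2), (1,√3)}. -/
def Qc : Set E2 :=
  convexHull ℝ {pt 0 (Real.sqrt 3), pt (-(1/2)) (Real.sqrt 3/2), pt (1/2) (Real.sqrt 3/2),
    pt 1 (Real.sqrt 3)}

open scoped ENNReal

/-- G K K' d : the probability that ‖X − Y‖ ≤ d for independent X uniform in K and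
Y uniform in K'. -/
def G (K K' : Set E2) (d : ℝ) : ℝ≥0∞ :=
  ((unif K).prod (unif K')) {p : E2 × E2 | dist p.1 p.2 ≤ d}


/-!
Each hexagon is the union of three rhombi of equal area with null pairwise intersections, so
its uniform law is the equal-weight mixture of the uniform laws on its rhombi, and `G hexa hexa'`
is the average of the nine terms `G Pᵢ Q_j`. The reflection in the line `y = √3/2` through the
common side is an isometry swapping `P₁ ↔ Q_c`, `P₂ ↔ Q_b`, `P₃ ↔ Q_a`; as `G` is invariant under
isometries and symmetric, `G P₂ Q_c = G P₁ Q_b`, `G P₃ Q_b = G P₂ Q_a` and `G P₃ Q_c = G P₁ Q_a`,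
which produces the weights `1/9` and `2/9`.
-/

open Function
open scoped Pointwise

lemma unif_iUnion {ι : Type*} [Fintype ι] {A : ι → Set E2} {r : ℝ≥0∞} (hr : r ≠ ∞)
    (hA : ∀ i, NullMeasurableSet (A i)) (hd : Pairwise (AEDisjoint volume on A))
    (hv : ∀ i, volume (A i) = r) :
    unif (⋃ i, A i) = (Fintype.card ι : ℝ≥0∞)⁻¹ • ∑ i, unif (A i) := by
  have hvol : volume (⋃ i, A i) = Fintype.card ι * r := by
    simp [measure_iUnion₀ hd hA, hv]
  simp only [unif, hvol, Measure.restrict_iUnion_ae hd hA, Measure.sum_fintype, hv,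
    ← Finset.smul_sum, smul_smul]
  rw [ENNReal.mul_inv (Or.inr hr) (Or.inl (ENNReal.natCast_ne_top _))]

lemma unif_image {f : E2 → E2} (hf : MeasurableEmbedding f) (hfv : MeasurePreserving f)
    (K : Set E2) : unif (f '' K) = (unif K).map f := by
  have hvol : volume (f '' K) = volume K := by
    conv_lhs => rw [← hfv.map_eq, hf.map_apply, hf.injective.preimage_image]
  rw [unif, unif, Measure.map_smul, hvol, (hfv.restrict_image_emb hf K).map_eq]

instance (K : Set E2) : SFinite (unif K) := by
  unfold unif; infer_instance

lemma MeasureTheory.Measure.prod_smul_sum_apply {α β ι κ : Type*} [MeasurableSpace α]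
    [MeasurableSpace β] [Fintype ι] [Fintype κ] (c c' : ℝ≥0∞) (μ : ι → Measure α)
    (ν : κ → Measure β) [∀ j, SFinite (ν j)] {s : Set (α × β)} (hs : MeasurableSet s) :
    ((c • ∑ i, μ i).prod (c' • ∑ j, ν j)) s = c * c' * ∑ i, ∑ j, (μ i).prod (ν j) s := by
  rw [← Measure.sum_fintype μ, ← Measure.sum_fintype ν, Measure.prod_smul_left,
    Measure.prod_smul_right, Measure.prod_sum, Measure.smul_apply, Measure.smul_apply,
    Measure.sum_apply _ hs, tsum_fintype, Fintype.sum_prod_type, smul_eq_mul, smul_eq_mul,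
    mul_assoc]

lemma measurableSet_dist_le (d : ℝ) : MeasurableSet {p : E2 × E2 | dist p.1 p.2 ≤ d} :=
  (isClosed_le (continuous_fst.dist continuous_snd) continuous_const).measurableSet

lemma G_eq_sum {ι κ : Type*} [Fintype ι] [Fintype κ] {K K' : Set E2} {c c' : ℝ≥0∞}
    {A : ι → Set E2} {B : κ → Set E2} (hK : unif K = c • ∑ i, unif (A i))
    (hK' : unif K' = c' • ∑ j, unif (B j)) (d : ℝ) :
    G K K' d = c * c' * ∑ i, ∑ j, G (A i) (B j) d := by
  rw [G, hK, hK', Measure.prod_smul_sum_apply _ _ _ _ (measurableSet_dist_le d)]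
  rfl

lemma G_image {f : E2 → E2} (hf : Isometry f) (hfv : MeasurePreserving f) (K K' : Set E2)
    (d : ℝ) : G (f '' K) (f '' K') d = G K K' d := by
  have hfe : MeasurableEmbedding f := hf.isClosedEmbedding.measurableEmbedding
  rw [G, unif_image hfe hfv, unif_image hfe hfv,
    Measure.map_prod_map _ _ hfe.measurable hfe.measurable,
    Measure.map_apply (hfe.measurable.prodMap hfe.measurable) (measurableSet_dist_le d)]
  simp only [preimage_ofPred_eq, Prod.map_fst, Prod.map_snd, hf.dist_eq]
  rfl

lemma G_comm (K K' : Set E2) (d : ℝ) : G K K' d = G K' K d := by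
  rw [G, G, ← Measure.prod_swap, Measure.map_apply measurable_swap (measurableSet_dist_le d)]
  simp only [preimage_ofPred_eq, Prod.fst_swap, Prod.snd_swap, dist_comm]

lemma G_image_right {f : E2 → E2} (hf : Isometry f) (hfv : MeasurePreserving f)
    (hf2 : Involutive f) (K K' : Set E2) (d : ℝ) : G K (f '' K') d = G (f '' K) K' d := by
  conv_rhs => rw [← hf2.leftInverse.image_image K']
  rw [G_image hf hfv]

@[simp] lemma pt_apply_zero (a b : ℝ) : pt a b 0 = a := rfl
@[simp] lemma pt_apply_one (a b : ℝ) : pt a b 1 = b := rfl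

lemma E2.eq_iff {p q : E2} : p = q ↔ p 0 = q 0 ∧ p 1 = q 1 := by
  refine ⟨by rintro rfl; simp, fun ⟨h0, h1⟩ => ?_⟩
  ext i; fin_cases i <;> assumption

lemma pt_zero : pt 0 0 = 0 := by ext i; fin_cases i <;> rfl

lemma pt_add_pt (a b c d : ℝ) : pt a b + pt c d = pt (a + c) (b + d) := by
  ext i; fin_cases i <;> rfl

def linForm (a b : ℝ) : E2 →ₗ[ℝ] ℝ :=
  (a • EuclideanSpace.proj (0 : Fin 2) + b • EuclideanSpace.proj (1 : Fin 2) : E2 →L[ℝ] ℝ)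

@[simp] lemma linForm_apply (a b : ℝ) (p : E2) : linForm a b p = a * p 0 + b * p 1 := rfl

lemma linForm_ne_zero (a : ℝ) {b : ℝ} (hb : b ≠ 0) : linForm a b ≠ 0 :=
  fun h => hb (by simpa using LinearMap.congr_fun h (pt 0 1))

def strip (a b c : ℝ) : Set E2 := {p | |linForm a b p| ≤ c}

lemma convex_strip (a b c : ℝ) : Convex ℝ (strip a b c) := by
  simp only [strip, abs_le, ofPred_and]
  exact (convex_halfSpace_ge (linForm a b).isLinear _).inter
    (convex_halfSpace_le (linForm a b).isLinear _)

lemma aedisjoint_convexHull_of_separated {E : Type*} [NormedAddCommGroup E] [NormedSpace ℝ E]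
    [FiniteDimensional ℝ E] [MeasurableSpace E] [BorelSpace E] (μ : Measure E)
    [μ.IsAddHaarMeasure] {f : E →ₗ[ℝ] ℝ} (hf : f ≠ 0) {s t : Set E}
    (hs : ∀ x ∈ s, 0 ≤ f x) (ht : ∀ x ∈ t, f x ≤ 0) :
    AEDisjoint μ (convexHull ℝ s) (convexHull ℝ t) := by
  have hs' : convexHull ℝ s ⊆ {x | 0 ≤ f x} :=
    convexHull_min hs (convex_halfSpace_ge f.isLinear 0)
  have ht' : convexHull ℝ t ⊆ {x | f x ≤ 0} :=
    convexHull_min ht (convex_halfSpace_le f.isLinear 0)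
  refine measure_mono_null (fun x hx => ?_) (Measure.addHaar_submodule μ (LinearMap.ker f) ?_)
  · exact LinearMap.mem_ker.2 (le_antisymm (ht' hx.2) (hs' hx.1))
  · rwa [Ne, LinearMap.ker_eq_top]

lemma convexHull_parallelogram {E : Type*} [AddCommGroup E] [Module ℝ E] (u w : E) :
    convexHull ℝ {0, u, w, u + w} = parallelepiped ![u, w] := by
  rw [parallelepiped_eq_convexHull, Fin.sum_univ_two]
  congr 1
  ext x
  simp only [Set.mem_add, Set.mem_insert_iff, Set.mem_singleton_iff, Matrix.cons_val_zero,
    Matrix.cons_val_one]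
  aesop

lemma smul_add_smul_mem_parallelepiped {E : Type*} [AddCommGroup E] [Module ℝ E] {u w : E}
    {a b : ℝ} (ha : a ∈ Icc (0 : ℝ) 1) (hb : b ∈ Icc (0 : ℝ) 1) :
    a • u + b • w ∈ parallelepiped ![u, w] := by
  refine (mem_parallelepiped_iff _ _).2 ⟨![a, b], ⟨fun i => ?_, fun i => ?_⟩, by simp⟩ <;>
    fin_cases i <;> simp [ha.1, ha.2, hb.1, hb.2]

lemma volume_parallelepiped_fin_two (u w : E2) :
    volume (parallelepiped ![u, w]) = ENNReal.ofReal |u 0 * w 1 - u 1 * w 0| := by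
  rw [← (EuclideanSpace.basisFun (Fin 2) ℝ).addHaar_eq_volume, Measure.addHaar_parallelepiped,
    Module.Basis.det_apply, Matrix.det_fin_two]
  simp [Module.Basis.toMatrix_apply, mul_comm]

lemma P1_eq : P1 = parallelepiped ![pt 1 0, pt (-(1/2)) (√3 / 2)] := by
  rw [← convexHull_parallelogram, P1, ← pt_zero, pt_add_pt]
  congr 1
  ext x
  simp only [mem_insert_iff, mem_singleton_iff]
  norm_num
  tauto

lemma P2_eq : P2 = parallelepiped ![pt (-(1/2)) (√3 / 2), pt (-(1/2)) (-(√3 / 2))] := by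
  rw [← convexHull_parallelogram, P2, ← pt_zero, pt_add_pt]
  congr 1
  ext x
  simp only [mem_insert_iff, mem_singleton_iff]
  norm_num
  tauto

lemma P3_eq : P3 = parallelepiped ![pt 1 0, pt (-(1/2)) (-(√3 / 2))] := by
  rw [← convexHull_parallelogram, P3, ← pt_zero, pt_add_pt]
  congr 1
  ext x
  simp only [mem_insert_iff, mem_singleton_iff]
  norm_num
  tauto

lemma volume_P1 : volume P1 = ENNReal.ofReal (√3 / 2) := by
  rw [P1_eq, volume_parallelepiped_fin_two]
  norm_num [abs_of_pos]

lemma volume_P2 : volume P2 = ENNReal.ofReal (√3 / 2) := by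
  rw [P2_eq, volume_parallelepiped_fin_two]
  congr 1
  norm_num
  ring_nf
  norm_num [abs_of_pos]

lemma volume_P3 : volume P3 = ENNReal.ofReal (√3 / 2) := by
  rw [P3_eq, volume_parallelepiped_fin_two]
  norm_num [abs_of_pos]

lemma aedisjoint_P1_P2 : AEDisjoint volume P1 P2 := by
  refine aedisjoint_convexHull_of_separated volume (linForm_ne_zero √3 one_ne_zero) ?_ ?_ <;>
    simp <;> constructor <;> linarith [sqrt_nonneg 3]

lemma aedisjoint_P1_P3 : AEDisjoint volume P1 P3 := by
  refine aedisjoint_convexHull_of_separated volume (linForm_ne_zero 0 one_ne_zero) ?_ ?_ <;>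
    simp <;> positivity

lemma aedisjoint_P2_P3 : AEDisjoint volume P2 P3 := by
  refine aedisjoint_convexHull_of_separated volume (linForm_ne_zero (-√3) one_ne_zero) ?_ ?_ <;>
    simp <;> constructor <;> linarith [sqrt_nonneg 3]

lemma mem_P1_of {p : E2} (h0 : 0 ≤ √3 * p 0 + p 1) (h1 : √3 * p 0 + p 1 ≤ √3)
    (h2 : 0 ≤ p 1) (h3 : p 1 ≤ √3 / 2) : p ∈ P1 := by
  rw [P1_eq]
  convert smul_add_smul_mem_parallelepiped (unitInterval.div_mem h0 (sqrt_nonneg 3) h1)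
    (unitInterval.div_mem (x := 2 * p 1) (by linarith) (sqrt_nonneg 3) (by linarith))
  rw [E2.eq_iff]
  constructor
  · simp; field_simp; ring
  · simp; field_simp

lemma mem_P2_of {p : E2} (h0 : 0 ≤ p 1 - √3 * p 0) (h1 : p 1 - √3 * p 0 ≤ √3)
    (h2 : 0 ≤ -(√3 * p 0) - p 1) (h3 : -(√3 * p 0) - p 1 ≤ √3) : p ∈ P2 := by
  rw [P2_eq]
  convert smul_add_smul_mem_parallelepiped (unitInterval.div_mem h0 (sqrt_nonneg 3) h1)
    (unitInterval.div_mem h2 (sqrt_nonneg 3) h3)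
  rw [E2.eq_iff]
  constructor <;> simp <;> field_simp <;> ring

lemma mem_P3_of {p : E2} (h0 : 0 ≤ √3 * p 0 - p 1) (h1 : √3 * p 0 - p 1 ≤ √3)
    (h2 : p 1 ≤ 0) (h3 : -(√3 / 2) ≤ p 1) : p ∈ P3 := by
  rw [P3_eq]
  convert smul_add_smul_mem_parallelepiped (unitInterval.div_mem h0 (sqrt_nonneg 3) h1)
    (unitInterval.div_mem (x := -(2 * p 1)) (by linarith) (sqrt_nonneg 3) (by linarith))
  rw [E2.eq_iff]
  constructor
  · simp; field_simp; ring
  · simp; field_simp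

lemma hexa_vertex (k : Fin 6) : pt (cos (k * π / 3)) (sin (k * π / 3)) =
    ![pt 1 0, pt (1/2) (√3/2), pt (-(1/2)) (√3/2), pt (-1) 0, pt (-(1/2)) (-(√3/2)),
      pt (1/2) (-(√3/2))] k := by
  have h2 : (2 : ℝ) * π / 3 = π - π / 3 := by ring
  have h3 : (3 : ℝ) * π / 3 = π := by ring
  have h4 : (4 : ℝ) * π / 3 = π / 3 + π := by ring
  have h5 : (5 : ℝ) * π / 3 = (π - π / 3) + π := by ring
  fin_cases k <;> simp [h2, h3, h4, h5, cos_add_pi, sin_add_pi, cos_pi_sub, sin_pi_sub]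

lemma hexa_eq_convexHull : hexa = convexHull ℝ (range ![pt 1 0, pt (1/2) (√3/2),
    pt (-(1/2)) (√3/2), pt (-1) 0, pt (-(1/2)) (-(√3/2)), pt (1/2) (-(√3/2))]) := by
  rw [hexa]
  congr 2
  exact funext hexa_vertex

lemma hexa_subset_strips : hexa ⊆ strip 0 1 (√3 / 2) ∩ strip √3 1 √3 ∩ strip √3 (-1) √3 := by
  rw [hexa_eq_convexHull]
  refine convexHull_min (range_subset_iff.2 fun k => ?_)
    (((convex_strip _ _ _).inter (convex_strip _ _ _)).inter (convex_strip _ _ _))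
  fin_cases k <;> simp only [mem_inter_iff, strip, mem_ofPred_eq, abs_le] <;> norm_num <;>
    (try constructorm* _ ∧ _) <;> linarith [sqrt_nonneg 3]

lemma strips_subset_union :
    strip 0 1 (√3 / 2) ∩ strip √3 1 √3 ∩ strip √3 (-1) √3 ⊆ P1 ∪ P2 ∪ P3 := by
  rintro p ⟨⟨h1, h2⟩, h3⟩
  simp only [strip, mem_ofPred_eq, linForm_apply, abs_le] at h1 h2 h3
  by_cases hy : 0 ≤ p 1
  · by_cases hx : 0 ≤ √3 * p 0 + p 1
    · exact Or.inl (Or.inl (mem_P1_of hx (by linarith) hy (by linarith)))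
    · exact Or.inl (Or.inr (mem_P2_of (by linarith) (by linarith) (by linarith) (by linarith)))
  · by_cases hx : 0 ≤ √3 * p 0 - p 1
    · exact Or.inr (mem_P3_of hx (by linarith) (by linarith) (by linarith))
    · exact Or.inl (Or.inr (mem_P2_of (by linarith) (by linarith) (by linarith) (by linarith)))

lemma union_subset_hexa : P1 ∪ P2 ∪ P3 ⊆ hexa := by
  rw [hexa_eq_convexHull]
  set V := ![pt 1 0, pt (1/2) (√3/2), pt (-(1/2)) (√3/2), pt (-1) 0, pt (-(1/2)) (-(√3/2)),
    pt (1/2) (-(√3/2))]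
  have hV (k : Fin 6) : V k ∈ convexHull ℝ (range V) := subset_convexHull ℝ _ (mem_range_self k)
  have hconv := convex_convexHull ℝ (range V)
  have h0 : pt 0 0 ∈ convexHull ℝ (range V) := by
    convert hconv (hV 0) (hV 3) (a := 1 / 2) (b := 1 / 2) (by norm_num) (by norm_num)
      (by norm_num) using 1
    change pt 0 0 = (1 / 2 : ℝ) • pt 1 0 + (1 / 2 : ℝ) • pt (-1) 0
    rw [E2.eq_iff]
    norm_num
  simp only [union_subset_iff, P1, P2, P3]
  refine ⟨⟨convexHull_min ?_ hconv, convexHull_min ?_ hconv⟩, convexHull_min ?_ hconv⟩ <;>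
    simp only [insert_subset_iff, singleton_subset_iff]
  · exact ⟨h0, hV 0, hV 1, hV 2⟩
  · exact ⟨h0, hV 2, hV 3, hV 4⟩
  · exact ⟨h0, hV 4, hV 5, hV 0⟩

lemma hexa_eq_iUnion : hexa = ⋃ i, ![P1, P2, P3] i := by
  rw [(hexa_subset_strips.trans strips_subset_union).antisymm union_subset_hexa]
  ext x
  simp [Fin.exists_fin_succ, or_assoc]

lemma pairwise_aedisjoint_P : Pairwise (AEDisjoint volume on ![P1, P2, P3]) := by
  intro i j hij
  fin_cases i <;> fin_cases j <;>
    simp_all [onFun, aedisjoint_P1_P2, aedisjoint_P1_P3, aedisjoint_P2_P3,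
      aedisjoint_P1_P2.symm, aedisjoint_P1_P3.symm, aedisjoint_P2_P3.symm]

lemma unif_hexa : unif hexa = (3 : ℝ≥0∞)⁻¹ • ∑ i, unif (![P1, P2, P3] i) := by
  have hm (i : Fin 3) : NullMeasurableSet (![P1, P2, P3] i) := by
    fin_cases i <;>
      exact ((toFinite _).isCompact_convexHull (𝕜 := ℝ)).measurableSet.nullMeasurableSet
  have hv (i : Fin 3) : volume (![P1, P2, P3] i) = ENNReal.ofReal (√3 / 2) := by
    fin_cases i
    exacts [volume_P1, volume_P2, volume_P3]
  rw [hexa_eq_iUnion, unif_iUnion ENNReal.ofReal_ne_top hm pairwise_aedisjoint_P hv,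
    Fintype.card_fin, Nat.cast_ofNat]

lemma image_convexHull_linearMap_add {E F : Type*} [AddCommGroup E] [Module ℝ E]
    [AddCommGroup F] [Module ℝ F] (f : E →ₗ[ℝ] F) (t : F) (s : Set E) :
    (fun p => f p + t) '' convexHull ℝ s = convexHull ℝ ((fun p => f p + t) '' s) :=
  (f.toAffineMap + AffineMap.const ℝ E t).image_convexHull s

lemma image_add_const_convexHull {E : Type*} [AddCommGroup E] [Module ℝ E] (t : E)
    (s : Set E) : (· + t) '' convexHull ℝ s = convexHull ℝ ((· + t) '' s) :=
  image_convexHull_linearMap_add LinearMap.id t s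

lemma Qa_eq : Qa = (· + pt 0 √3) '' P1 := by
  rw [P1, Qa, image_add_const_convexHull]
  simp only [image_insert_eq, image_singleton, pt_add_pt]
  ring_nf

lemma Qb_eq : Qb = (· + pt 0 √3) '' P2 := by
  rw [P2, Qb, image_add_const_convexHull]
  simp only [image_insert_eq, image_singleton, pt_add_pt]
  ring_nf

lemma Qc_eq : Qc = (· + pt 0 √3) '' P3 := by
  rw [P3, Qc, image_add_const_convexHull]
  simp only [image_insert_eq, image_singleton, pt_add_pt]
  ring_nf

lemma unif_hexa' : unif hexa' = (3 : ℝ≥0∞)⁻¹ • ∑ i, unif (![Qa, Qb, Qc] i) := by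
  have hτ : MeasurableEmbedding (· + pt 0 √3) :=
    (MeasurableEquiv.addRight (pt 0 √3)).measurableEmbedding
  have hτv := measurePreserving_add_right volume (pt 0 √3)
  rw [hexa', unif_image hτ hτv, unif_hexa, Measure.map_smul,
    Measure.map_finset_sum' hτ.measurable.aemeasurable]
  congr 1
  refine Finset.sum_congr rfl fun i _ => ?_
  rw [← unif_image hτ hτv]
  fin_cases i
  · simp [Qa_eq]
  · simp [Qb_eq]
  · simp [Qc_eq]

def flipSnd : E2 ≃ₗᵢ[ℝ] E2 :=
  LinearIsometryEquiv.piLpCongrRight 2 ![LinearIsometryEquiv.refl ℝ ℝ, LinearIsometryEquiv.neg ℝ]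

@[simp] lemma flipSnd_apply_zero (p : E2) : flipSnd p 0 = p 0 := rfl
@[simp] lemma flipSnd_apply_one (p : E2) : flipSnd p 1 = -p 1 := rfl

def sideReflection (p : E2) : E2 := flipSnd p + pt 0 √3

lemma sideReflection_pt (a b : ℝ) : sideReflection (pt a b) = pt a (√3 - b) := by
  rw [E2.eq_iff]; simp [sideReflection]; ring

lemma isometry_sideReflection : Isometry sideReflection :=
  Isometry.of_dist_eq fun x y => by simp [sideReflection, flipSnd.dist_map]

lemma measurePreserving_sideReflection : MeasurePreserving sideReflection :=
  (measurePreserving_add_right volume _).comp flipSnd.measurePreserving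

lemma involutive_sideReflection : Involutive sideReflection := fun p => by
  rw [E2.eq_iff]; simp [sideReflection]

lemma G_image_sideReflection_right (K K' : Set E2) (d : ℝ) :
    G K (sideReflection '' K') d = G (sideReflection '' K) K' d :=
  G_image_right isometry_sideReflection measurePreserving_sideReflection
    involutive_sideReflection K K' d

lemma image_sideReflection_convexHull (s : Set E2) :
    sideReflection '' convexHull ℝ s = convexHull ℝ (sideReflection '' s) :=
  image_convexHull_linearMap_add flipSnd.toLinearEquiv.toLinearMap _ s

lemma image_sideReflection_P1 : sideReflection '' P1 = Qc := by
  rw [P1, Qc, image_sideReflection_convexHull]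
  simp only [image_insert_eq, image_singleton, sideReflection_pt]
  ring_nf
  congr 1
  ext x
  simp only [mem_insert_iff, mem_singleton_iff]
  tauto

lemma image_sideReflection_P2 : sideReflection '' P2 = Qb := by
  rw [P2, Qb, image_sideReflection_convexHull]
  simp only [image_insert_eq, image_singleton, sideReflection_pt]
  ring_nf
  congr 1
  ext x
  simp only [mem_insert_iff, mem_singleton_iff]
  tauto

lemma image_sideReflection_P3 : sideReflection '' P3 = Qa := by
  rw [P3, Qa, image_sideReflection_convexHull]
  simp only [image_insert_eq, image_singleton, sideReflection_pt]
  ring_nf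
  congr 1
  ext x
  simp only [mem_insert_iff, mem_singleton_iff]
  tauto

/-- Mixture identity for the distance CDF between two adjacent unit hexagons in terms of
the rhombus-pair CDFs. -/
theorem stmt13 :
    ∀ d : ℝ,
      G hexa hexa' d =
        (1/9 : ℝ≥0∞) * (G P1 Qc d + G P2 Qb d + G P3 Qa d)
          + (2/9 : ℝ≥0∞) * (G P1 Qa d + G P1 Qb d + G P2 Qa d) := by
  intro d
  have hP2Qc : G P2 Qc d = G P1 Qb d := by
    rw [← image_sideReflection_P1, G_image_sideReflection_right, image_sideReflection_P2, G_comm]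
  have hP3Qb : G P3 Qb d = G P2 Qa d := by
    rw [← image_sideReflection_P2, G_image_sideReflection_right, image_sideReflection_P3, G_comm]
  have hP3Qc : G P3 Qc d = G P1 Qa d := by
    rw [← image_sideReflection_P1, G_image_sideReflection_right, image_sideReflection_P3, G_comm]
  have h9 : (3 : ℝ≥0∞)⁻¹ * 3⁻¹ = 9⁻¹ := by
    rw [← ENNReal.mul_inv (by norm_num) (by norm_num)]; norm_num
  rw [G_eq_sum unif_hexa unif_hexa' d]
  simp only [Fin.sum_univ_three, Matrix.cons_val_zero, Matrix.cons_val_one, Matrix.cons_val_two,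
    Matrix.tail_cons, Matrix.head_cons]
  rw [hP2Qc, hP3Qb, hP3Qc, h9, one_div, div_eq_mul_inv]
  ring
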